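/- arXiv:2303.14529 — 9 statements merged into one kernel-verified Lean document; each statement's English description precedes it below -/
import Mathlib

section
/- For every formula A of L, every DI9 valuation α for L, and every truth value W ∈ {T, F}: α*(A) = W if and only if there exists a real number j such that Iα(A, j) = W. -/
/-- Formulas of the propositional language L: countably many atoms,
negation, and disjunction. -/
inductive Form : Type
  | atom : ℕ → Form
  | neg : Form → Form
  | disj : Form → Form → Form

/-- The three values: the truth values `T`, `F`, and the value `O`
(absence of truth value). -/
inductive Val3 : Type
  | T : Val3
  | F : Val3
  | O : Val3
  deriving DecidableEq

/-- A DI9 valuation for L: a function from (atomic formula, real number)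
to {T, F, O} satisfying persistence of truth values and weak bivalence. -/
structure DI9Val where
  val : ℕ → ℝ → Val3
  mono_T : ∀ (n : ℕ) (j h : ℝ), j < h → val n j = Val3.T → val n h = Val3.T
  mono_F : ∀ (n : ℕ) (j h : ℝ), j < h → val n j = Val3.F → val n h = Val3.F
  eventually_tv : ∀ n : ℕ, ∃ j : ℝ, val n j = Val3.T ∨ val n j = Val3.F

-- The DI9 classical interpretation α* associated to a DI9 valuation α.
open Classical in
noncomputable def cstar (α : DI9Val) : Form → Val3
  | .atom n => if ∃ j : ℝ, α.val n j = Val3.T then Val3.T else Val3.F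
  | .neg B => if cstar α B = Val3.F then Val3.T else Val3.F
  | .disj B C => if cstar α B = Val3.T ∨ cstar α C = Val3.T then Val3.T else Val3.F

/-- β is a j-extension of α: they agree on all atomic formulas at all times ≤ j. -/
def IsJExt (β α : DI9Val) (j : ℝ) : Prop :=
  ∀ (n : ℕ) (h : ℝ), h ≤ j → β.val n h = α.val n h

-- The DI9 interpretation Iα associated to a DI9 valuation α.
open Classical in
noncomputable def interp (α : DI9Val) : Form → ℝ → Val3
  | .atom n, j => α.val n j
  | .neg B, j =>
      match interp α B j with
      | Val3.T => Val3.F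
      | Val3.F => Val3.T
      | Val3.O => Val3.O
  | .disj B C, j =>
      if ∀ β : DI9Val, IsJExt β α j → (cstar β B = Val3.T ∨ cstar β C = Val3.T) then
        Val3.T
      else if ∀ β : DI9Val, IsJExt β α j → (cstar β B = Val3.F ∧ cstar β C = Val3.F) then
        Val3.F
      else Val3.O

/-- A classical interpretation for L. -/
structure ClassInterp where
  val : Form → Val3
  tv : ∀ A : Form, val A = Val3.T ∨ val A = Val3.F
  neg_iff : ∀ B : Form, val (.neg B) = Val3.T ↔ val B = Val3.F
  disj_iff : ∀ B C : Form, val (.disj B C) = Val3.T ↔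
    (val B = Val3.T ∨ val C = Val3.T)

/-- A is a tautological consequence of Γ in the sense of classical semantics. -/
def TautConseq (Γ : Set Form) (A : Form) : Prop :=
  ∀ Ic : ClassInterp, (∀ B ∈ Γ, Ic.val B = Val3.T) → Ic.val A = Val3.T

/-- A is a DI9 logical consequence of Γ. -/
def DI9Conseq (Γ : Set Form) (A : Form) : Prop :=
  ∀ (j : ℝ) (α : DI9Val), (∀ B ∈ Γ, interp α B j = Val3.T) → interp α A j = Val3.T

lemma cstar_tv (α : DI9Val) (A : Form) : cstar α A = Val3.T ∨ cstar α A = Val3.F := by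
  cases A <;> rw [cstar] <;> split <;> simp

lemma atom_not_TF (α : DI9Val) (n : ℕ) {j h : ℝ} (hT : α.val n j = Val3.T)
    (hF : α.val n h = Val3.F) : False := by
  have h1 := α.mono_T n j (max j h + 1) (lt_of_le_of_lt (le_max_left _ _) (lt_add_one _)) hT
  have h2 := α.mono_F n h (max j h + 1) (lt_of_le_of_lt (le_max_right _ _) (lt_add_one _)) hF
  rw [h1] at h2
  exact Val3.noConfusion h2

lemma isJExt_mono {β α : DI9Val} {j j' : ℝ} (hle : j ≤ j') (h : IsJExt β α j') :
    IsJExt β α j := fun n h' hh' => h n h' (hh'.trans hle)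

lemma isJExt_refl (α : DI9Val) (j : ℝ) : IsJExt α α j := fun _ _ _ => rfl

lemma stab (α : DI9Val) (A : Form) :
    ∃ j : ℝ, ∀ β : DI9Val, IsJExt β α j → cstar β A = cstar α A := by
  induction A with
  | atom n =>
    by_cases h : ∃ j, α.val n j = Val3.T
    · obtain ⟨j, hj⟩ := h
      refine ⟨j, fun β hβ => ?_⟩
      have hb : β.val n j = Val3.T := by rw [hβ n j le_rfl]; exact hj
      rw [cstar, cstar, if_pos ⟨j, hb⟩, if_pos ⟨j, hj⟩]
    · obtain ⟨j, hj⟩ := α.eventually_tv n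
      have hjF : α.val n j = Val3.F := by
        rcases hj with hj | hj
        · exact absurd ⟨j, hj⟩ h
        · exact hj
      refine ⟨j, fun β hβ => ?_⟩
      have hb : β.val n j = Val3.F := by rw [hβ n j le_rfl]; exact hjF
      have hbne : ¬∃ k, β.val n k = Val3.T := by
        rintro ⟨k, hk⟩; exact atom_not_TF β n hk hb
      rw [cstar, cstar, if_neg hbne, if_neg h]
  | neg B ih =>
    obtain ⟨j, hj⟩ := ih
    exact ⟨j, fun β hβ => by rw [cstar, cstar, hj β hβ]⟩
  | disj B C ihB ihC =>
    obtain ⟨j1, h1⟩ := ihB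
    obtain ⟨j2, h2⟩ := ihC
    refine ⟨max j1 j2, fun β hβ => ?_⟩
    rw [cstar, cstar, h1 β (isJExt_mono (le_max_left _ _) hβ),
      h2 β (isJExt_mono (le_max_right _ _) hβ)]

lemma cstar_atom_T (α : DI9Val) (n : ℕ) :
    cstar α (.atom n) = Val3.T ↔ ∃ j, α.val n j = Val3.T := by
  rw [cstar]; split_ifs with h <;> simp [h]

lemma cstar_atom_F (α : DI9Val) (n : ℕ) :
    cstar α (.atom n) = Val3.F ↔ ∃ j, α.val n j = Val3.F := by
  rw [cstar]; split_ifs with h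
  · constructor
    · intro h'; exact absurd h' (by simp)
    · rintro ⟨j, hj⟩
      obtain ⟨k, hk⟩ := h
      exact (atom_not_TF α n hk hj).elim
  · constructor
    · intro _
      obtain ⟨j, hj⟩ := α.eventually_tv n
      rcases hj with hj | hj
      · exact absurd ⟨j, hj⟩ h
      · exact ⟨j, hj⟩
    · intro _; rfl

lemma interp_atom (α : DI9Val) (n : ℕ) (j : ℝ) : interp α (.atom n) j = α.val n j := by
  rw [interp]

lemma interp_neg_T (α : DI9Val) (B : Form) (j : ℝ) :
    interp α (.neg B) j = Val3.T ↔ interp α B j = Val3.F := by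
  rw [interp]
  cases hB : interp α B j <;> simp [hB]

lemma interp_neg_F (α : DI9Val) (B : Form) (j : ℝ) :
    interp α (.neg B) j = Val3.F ↔ interp α B j = Val3.T := by
  rw [interp]
  cases hB : interp α B j <;> simp [hB]

lemma interp_disj_T (α : DI9Val) (B C : Form) (j : ℝ) :
    interp α (.disj B C) j = Val3.T ↔
      ∀ β : DI9Val, IsJExt β α j → (cstar β B = Val3.T ∨ cstar β C = Val3.T) := by
  rw [interp]
  split_ifs with h1 h2
  · simpa using h1
  · simp [h1]
  · simp [h1]

lemma interp_disj_F (α : DI9Val) (B C : Form) (j : ℝ) :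
    interp α (.disj B C) j = Val3.F ↔
      ∀ β : DI9Val, IsJExt β α j → (cstar β B = Val3.F ∧ cstar β C = Val3.F) := by
  rw [interp]
  split_ifs with h1 h2
  · constructor
    · intro h'; exact absurd h' (by simp)
    · intro hc
      rcases h1 α (isJExt_refl α j) with hT | hT
      · rw [(hc α (isJExt_refl α j)).1] at hT; exact Val3.noConfusion hT
      · rw [(hc α (isJExt_refl α j)).2] at hT; exact Val3.noConfusion hT
  · simpa using h2
  · simp [h2]

lemma cstar_interp (α : DI9Val) (A : Form) :
    (cstar α A = Val3.T ↔ ∃ j, interp α A j = Val3.T) ∧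
    (cstar α A = Val3.F ↔ ∃ j, interp α A j = Val3.F) := by
  induction A with
  | atom n =>
    simp only [interp_atom]
    exact ⟨cstar_atom_T α n, cstar_atom_F α n⟩
  | neg B ih =>
    constructor
    · constructor
      · intro h
        have hB : cstar α B = Val3.F := by
          by_contra hc
          rw [cstar, if_neg hc] at h
          exact Val3.noConfusion h
        obtain ⟨j, hj⟩ := ih.2.1 hB
        exact ⟨j, (interp_neg_T α B j).2 hj⟩
      · rintro ⟨j, hj⟩
        have hBF := (interp_neg_T α B j).1 hj
        rw [cstar, if_pos (ih.2.2 ⟨j, hBF⟩)]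
    · constructor
      · intro h
        have hB : cstar α B = Val3.T := by
          rcases cstar_tv α B with hT | hF
          · exact hT
          · rw [cstar, if_pos hF] at h; exact absurd h (by simp)
        obtain ⟨j, hj⟩ := ih.1.1 hB
        exact ⟨j, (interp_neg_F α B j).2 hj⟩
      · rintro ⟨j, hj⟩
        have hBT : cstar α B = Val3.T := ih.1.2 ⟨j, (interp_neg_F α B j).1 hj⟩
        rw [cstar, if_neg (by rw [hBT]; simp)]
  | disj B C ihB ihC =>
    obtain ⟨jB, hjB⟩ := stab α B
    obtain ⟨jC, hjC⟩ := stab α C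
    constructor
    · constructor
      · intro h
        have h' : cstar α B = Val3.T ∨ cstar α C = Val3.T := by
          by_contra hc
          rw [cstar, if_neg hc] at h
          exact Val3.noConfusion h
        refine ⟨max jB jC, (interp_disj_T α B C _).2 ?_⟩
        intro β hβ
        rw [hjB β (isJExt_mono (le_max_left _ _) hβ),
          hjC β (isJExt_mono (le_max_right _ _) hβ)]
        exact h'
      · rintro ⟨j, hj⟩
        have := (interp_disj_T α B C j).1 hj α (isJExt_refl α j)
        rw [cstar, if_pos this]
    · constructor
      · intro h
        have hBC : cstar α B = Val3.F ∧ cstar α C = Val3.F := by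
          by_cases hc : cstar α B = Val3.T ∨ cstar α C = Val3.T
          · rw [cstar, if_pos hc] at h; exact absurd h (by simp)
          · push_neg at hc
            exact ⟨(cstar_tv α B).resolve_left hc.1, (cstar_tv α C).resolve_left hc.2⟩
        refine ⟨max jB jC, (interp_disj_F α B C _).2 ?_⟩
        intro β hβ
        rw [hjB β (isJExt_mono (le_max_left _ _) hβ),
          hjC β (isJExt_mono (le_max_right _ _) hβ)]
        exact hBC
      · rintro ⟨j, hj⟩
        have hc := (interp_disj_F α B C j).1 hj α (isJExt_refl α j)
        rw [cstar, if_neg (by rw [hc.1, hc.2]; simp)]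

theorem stmt_2 (A : Form) (α : DI9Val) (W : Val3) (hW : W = Val3.T ∨ W = Val3.F) :
    cstar α A = W ↔ ∃ j : ℝ, interp α A j = W := by
  rcases hW with rfl | rfl
  · exact (cstar_interp α A).1
  · exact (cstar_interp α A).2
end

section
/- For every formula A of L and every DI9 valuation α for L, there exists a real number j such that Iα(A, j) = T or Iα(A, j) = F. -/
def Form.atoms : Form → Finset ℕ
  | .atom n => {n}
  | .neg B => B.atoms
  | .disj B C => B.atoms ∪ C.atoms

lemma settled_mono (α : DI9Val) {n : ℕ} {j h : ℝ} (hjh : j ≤ h)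
    (hs : α.val n j = Val3.T ∨ α.val n j = Val3.F) :
    α.val n h = Val3.T ∨ α.val n h = Val3.F := by
  rcases lt_or_eq_of_le hjh with hlt | rfl
  · rcases hs with hT | hF
    · exact Or.inl (α.mono_T n j h hlt hT)
    · exact Or.inr (α.mono_F n j h hlt hF)
  · exact hs

lemma cstar_eq_of_settled (α : DI9Val) {j : ℝ} :
    ∀ A : Form, (∀ n ∈ A.atoms, α.val n j = Val3.T ∨ α.val n j = Val3.F) →
    ∀ β : DI9Val, IsJExt β α j → cstar β A = cstar α A := by
  intro A
  induction A with
  | atom n =>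
    intro hs β hβ
    rcases hs n (by simp [Form.atoms]) with hT | hF
    · have h1 : ∃ h, α.val n h = Val3.T := ⟨j, hT⟩
      have h2 : ∃ h, β.val n h = Val3.T := ⟨j, by rw [hβ n j le_rfl]; exact hT⟩
      simp [cstar, h1, h2]
    · have h1 : ¬ ∃ h, α.val n h = Val3.T := by
        rintro ⟨h, hh⟩
        rcases lt_trichotomy h j with hlt | rfl | hgt
        · rw [α.mono_T n h j hlt hh] at hF; exact Val3.noConfusion hF
        · rw [hh] at hF; exact Val3.noConfusion hF
        · rw [α.mono_F n j h hgt hF] at hh; exact Val3.noConfusion hh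
      have h2 : ¬ ∃ h, β.val n h = Val3.T := by
        rintro ⟨h, hh⟩
        rcases le_or_gt h j with hle | hgt
        · exact h1 ⟨h, by rw [← hβ n h hle]; exact hh⟩
        · have : β.val n j = Val3.F := by rw [hβ n j le_rfl]; exact hF
          rw [β.mono_F n j h hgt this] at hh; exact Val3.noConfusion hh
      simp [cstar, h1, h2]
  | neg B ih =>
    intro hs β hβ
    have := ih (fun n hn => hs n hn) β hβ
    simp [cstar, this]
  | disj B C ihB ihC =>
    intro hs β hβ
    have hB := ihB (fun n hn => hs n (by simp [Form.atoms, hn])) β hβ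
    have hC := ihC (fun n hn => hs n (by simp [Form.atoms, hn])) β hβ
    simp [cstar, hB, hC]

lemma interp_tv_of_settled (α : DI9Val) {j : ℝ} :
    ∀ A : Form, (∀ n ∈ A.atoms, α.val n j = Val3.T ∨ α.val n j = Val3.F) →
    interp α A j = Val3.T ∨ interp α A j = Val3.F := by
  intro A
  induction A with
  | atom n =>
    intro hs
    exact hs n (by simp [Form.atoms])
  | neg B ih =>
    intro hs
    rcases ih hs with hT | hF
    · right; simp [interp, hT]
    · left; simp [interp, hF]
  | disj B C ihB ihC =>
    intro hs
    by_cases hc : cstar α B = Val3.T ∨ cstar α C = Val3.T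
    · left
      have : ∀ β : DI9Val, IsJExt β α j → (cstar β B = Val3.T ∨ cstar β C = Val3.T) := by
        intro β hβ
        rw [cstar_eq_of_settled α B (fun n hn => hs n (by simp [Form.atoms, hn])) β hβ,
            cstar_eq_of_settled α C (fun n hn => hs n (by simp [Form.atoms, hn])) β hβ]
        exact hc
      simp only [interp]
      rw [if_pos this]
    · right
      push_neg at hc
      have hBF : cstar α B = Val3.F := (cstar_tv α B).resolve_left hc.1
      have hCF : cstar α C = Val3.F := (cstar_tv α C).resolve_left hc.2
      have h1 : ¬ ∀ β : DI9Val, IsJExt β α j → (cstar β B = Val3.T ∨ cstar β C = Val3.T) := by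
        intro h
        rcases h α (fun n h' _ => rfl) with hT | hT
        · rw [hT] at hBF; exact Val3.noConfusion hBF
        · rw [hT] at hCF; exact Val3.noConfusion hCF
      have h2 : ∀ β : DI9Val, IsJExt β α j → (cstar β B = Val3.F ∧ cstar β C = Val3.F) := by
        intro β hβ
        rw [cstar_eq_of_settled α B (fun n hn => hs n (by simp [Form.atoms, hn])) β hβ,
            cstar_eq_of_settled α C (fun n hn => hs n (by simp [Form.atoms, hn])) β hβ]
        exact ⟨hBF, hCF⟩
      simp only [interp]
      rw [if_neg h1, if_pos h2]

theorem stmt_3 (A : Form) (α : DI9Val) :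
    ∃ j : ℝ, interp α A j = Val3.T ∨ interp α A j = Val3.F := by
  choose f hf using α.eventually_tv
  obtain ⟨j, hj⟩ := (A.atoms.image f).exists_le
  refine ⟨j, interp_tv_of_settled α A ?_⟩
  intro n hn
  exact settled_mono α (hj _ (Finset.mem_image_of_mem f hn)) (hf n)
end

section
/- For every formula A of L, every DI9 valuation α for L, every truth value W ∈ {T, F}, and all real numbers j and h with j ≤ h: if Iα(A, j) = W then Iα(A, h) = W. -/
theorem stmt_4 (A : Form) (α : DI9Val) (W : Val3) (hW : W = Val3.T ∨ W = Val3.F)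
    (j h : ℝ) (hjh : j ≤ h) : interp α A j = W → interp α A h = W := by
  induction A generalizing W with
  | atom n =>
    intro hj
    rcases eq_or_lt_of_le hjh with rfl | hlt
    · exact hj
    · simp only [interp] at hj ⊢
      rcases hW with rfl | rfl
      · exact α.mono_T n j h hlt hj
      · exact α.mono_F n j h hlt hj
  | neg B ihB =>
    intro hj
    simp only [interp] at hj ⊢
    rcases hW with rfl | rfl
    · have hB : interp α B j = Val3.F := by
        cases hb : interp α B j <;> rw [hb] at hj <;> simp_all
      rw [ihB Val3.F (Or.inr rfl) hB]
    · have hB : interp α B j = Val3.T := by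
        cases hb : interp α B j <;> rw [hb] at hj <;> simp_all
      rw [ihB Val3.T (Or.inl rfl) hB]
  | disj B C ihB ihC =>
    intro hjT
    have hsub : ∀ β : DI9Val, IsJExt β α h → IsJExt β α j :=
      fun β hβ n h' hh' => hβ n h' (le_trans hh' hjh)
    simp only [interp] at hjT ⊢
    rcases hW with rfl | rfl
    · split at hjT
      · next hall =>
        rw [if_pos (fun β hβ => hall β (hsub β hβ))]
      · split at hjT <;> simp_all
    · split at hjT
      · simp_all
      · split at hjT
        · next _ hall =>
          rw [if_neg ?_, if_pos (fun β hβ => hall β (hsub β hβ))]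
          intro hc
          have := hall α (fun n h' _ => rfl)
          have := hc α (fun n h' _ => rfl)
          simp_all
        · simp_all
end

section
/- If a formula A of L is a tautological consequence of a set Γ of formulas of L in the sense of classical semantics, then A is a DI9 logical consequence of Γ. -/
lemma mono_T' (α : DI9Val) (n : ℕ) {j h : ℝ} (hle : j ≤ h)
    (ht : α.val n j = Val3.T) : α.val n h = Val3.T := by
  rcases lt_or_eq_of_le hle with h' | h'
  · exact α.mono_T n j h h' ht
  · rw [← h']; exact ht

lemma mono_F' (α : DI9Val) (n : ℕ) {j h : ℝ} (hle : j ≤ h)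
    (ht : α.val n j = Val3.F) : α.val n h = Val3.F := by
  rcases lt_or_eq_of_le hle with h' | h'
  · exact α.mono_F n j h h' ht
  · rw [← h']; exact ht

lemma val_O_of_le (α : DI9Val) (n : ℕ) {j h : ℝ} (hle : h ≤ j)
    (hO : α.val n j = Val3.O) : α.val n h = Val3.O := by
  rcases hT : α.val n h with _ | _ | _
  · rw [mono_T' α n hle hT] at hO; exact absurd hO (by simp)
  · rw [mono_F' α n hle hT] at hO; exact absurd hO (by simp)
  · rfl

open Classical in
lemma exists_ext_force (α : DI9Val) (n : ℕ) (j : ℝ) (hO : α.val n j = Val3.O)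
    (v : Val3) (hv : v = Val3.T ∨ v = Val3.F) :
    ∃ β : DI9Val, IsJExt β α j ∧
      ∀ h : ℝ, β.val n h = if j < h then v else α.val n h := by
  refine ⟨⟨fun m h => if m = n ∧ j < h then v else α.val m h, ?_, ?_, ?_⟩, ?_, ?_⟩
  · intro m j' h' hlt ht
    by_cases hm : m = n
    · subst hm
      by_cases h1 : j < j'
      · rw [if_pos ⟨rfl, h1⟩] at ht
        rw [if_pos ⟨rfl, h1.trans hlt⟩]
        exact ht
      · rw [if_neg (fun hc => h1 hc.2)] at ht
        exfalso
        rw [mono_T' α m (le_of_not_gt h1) ht] at hO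
        exact absurd hO (by simp)
    · rw [if_neg (fun hc => hm hc.1)] at ht
      rw [if_neg (fun hc => hm hc.1)]
      exact α.mono_T m j' h' hlt ht
  · intro m j' h' hlt ht
    by_cases hm : m = n
    · subst hm
      by_cases h1 : j < j'
      · rw [if_pos ⟨rfl, h1⟩] at ht
        rw [if_pos ⟨rfl, h1.trans hlt⟩]
        exact ht
      · rw [if_neg (fun hc => h1 hc.2)] at ht
        exfalso
        rw [mono_F' α m (le_of_not_gt h1) ht] at hO
        exact absurd hO (by simp)
    · rw [if_neg (fun hc => hm hc.1)] at ht
      rw [if_neg (fun hc => hm hc.1)]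
      exact α.mono_F m j' h' hlt ht
  · intro m
    by_cases hm : m = n
    · subst hm
      refine ⟨j + 1, ?_⟩
      rw [if_pos ⟨rfl, by linarith⟩]
      rcases hv with hv | hv <;> simp [hv]
    · obtain ⟨j', hj'⟩ := α.eventually_tv m
      refine ⟨j', ?_⟩
      rw [if_neg (fun hc => hm hc.1)]
      exact hj'
  · intro m h hle
    dsimp only
    rw [if_neg (fun hc => absurd hle (not_le.mpr hc.2))]
  · intro h
    dsimp only
    by_cases hlt : j < h
    · rw [if_pos ⟨rfl, hlt⟩, if_pos hlt]
    · rw [if_neg (fun hc => hlt hc.2), if_neg hlt]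

/-- `cstar α` is a classical interpretation. -/
noncomputable def toClassInterp (α : DI9Val) : ClassInterp where
  val := cstar α
  tv := cstar_tv α
  neg_iff := by
    intro B
    simp only [cstar]
    split_ifs with hc <;> simp [hc]
  disj_iff := by
    intro B C
    simp only [cstar]
    split_ifs with hc <;> simp [hc]

lemma cstar_neg_F (α : DI9Val) (B : Form) :
    cstar α (.neg B) = Val3.F ↔ cstar α B = Val3.T := by
  simp only [cstar]
  split_ifs with hc
  · constructor
    · intro h; exact absurd h (by simp)
    · intro hT; rw [hT] at hc; exact absurd hc (by simp)
  · constructor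
    · intro _
      rcases cstar_tv α B with hB | hB
      · exact hB
      · exact absurd hB hc
    · intro _; rfl

lemma cstar_disj_F (α : DI9Val) (B C : Form) :
    cstar α (.disj B C) = Val3.F ↔ (cstar α B = Val3.F ∧ cstar α C = Val3.F) := by
  simp only [cstar]
  split_ifs with hc
  · constructor
    · intro h; exact absurd h (by simp)
    · rintro ⟨hB, hC⟩
      rcases hc with hc | hc
      · rw [hc] at hB; exact absurd hB (by simp)
      · rw [hc] at hC; exact absurd hC (by simp)
  · push_neg at hc
    constructor
    · intro _
      rcases cstar_tv α B with hB | hB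
      · exact absurd hB hc.1
      · rcases cstar_tv α C with hC | hC
        · exact absurd hC hc.2
        · exact ⟨hB, hC⟩
    · intro _; rfl

/-- Forward: truth/falsity of `interp` at `j` transfers to `cstar` of all
`j`-extensions. -/
lemma interp_to_cstar (α : DI9Val) (j : ℝ) : ∀ A : Form,
    (interp α A j = Val3.T → ∀ β : DI9Val, IsJExt β α j → cstar β A = Val3.T) ∧
    (interp α A j = Val3.F → ∀ β : DI9Val, IsJExt β α j → cstar β A = Val3.F) := by
  intro A
  induction A with
  | atom n =>
      constructor
      · intro hT β hβ
        simp only [interp] at hT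
        simp only [cstar]
        rw [if_pos ⟨j, by rw [hβ n j le_rfl]; exact hT⟩]
      · intro hF β hβ
        simp only [interp] at hF
        simp only [cstar]
        rw [if_neg]
        rintro ⟨h, hh⟩
        rcases le_or_gt h j with hle | hlt
        · rw [hβ n h hle] at hh
          rw [mono_T' α n hle hh] at hF
          exact absurd hF (by simp)
        · have hj : β.val n j = Val3.F := by rw [hβ n j le_rfl]; exact hF
          rw [β.mono_F n j h hlt hj] at hh
          exact absurd hh (by simp)
  | neg B ih =>
      constructor
      · intro hT β hβ
        simp only [interp] at hT
        have hBF : interp α B j = Val3.F := by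
          rcases hB : interp α B j with _ | _ | _ <;> rw [hB] at hT <;>
            first | rfl | exact absurd hT (by simp)
        have hc := ih.2 hBF β hβ
        simp only [cstar]
        rw [if_pos hc]
      · intro hF β hβ
        simp only [interp] at hF
        have hBT : interp α B j = Val3.T := by
          rcases hB : interp α B j with _ | _ | _ <;> rw [hB] at hF <;>
            first | rfl | exact absurd hF (by simp)
        have hc := ih.1 hBT β hβ
        simp only [cstar]
        rw [if_neg (by simp [hc])]
  | disj B C ihB ihC =>
      constructor
      · intro hT β hβ
        simp only [interp] at hT
        split_ifs at hT with h1
        simp only [cstar]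
        rw [if_pos (h1 β hβ)]
      · intro hF β hβ
        simp only [interp] at hF
        split_ifs at hF with h1 h2
        exact (cstar_disj_F β B C).mpr (h2 β hβ)

/-- Backward: if all `j`-extensions agree on `cstar`, then `interp` is decided
at `j`. -/
lemma cstar_to_interp (α : DI9Val) (j : ℝ) : ∀ A : Form,
    ((∀ β : DI9Val, IsJExt β α j → cstar β A = Val3.T) → interp α A j = Val3.T) ∧
    ((∀ β : DI9Val, IsJExt β α j → cstar β A = Val3.F) → interp α A j = Val3.F) := by
  intro A
  induction A with
  | atom n =>
      constructor
      · intro H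
        simp only [interp]
        rcases hv : α.val n j with _ | _ | _
        · rfl
        · exfalso
          have hc := H α (isJExt_refl α j)
          simp only [cstar] at hc
          split_ifs at hc with hex
          obtain ⟨h, hh⟩ := hex
          rcases le_or_gt h j with hle | hlt
          · rw [mono_T' α n hle hh] at hv; exact absurd hv (by simp)
          · rw [α.mono_F n j h hlt hv] at hh; exact absurd hh (by simp)
        · exfalso
          obtain ⟨β, hβ, hval⟩ := exists_ext_force α n j hv Val3.F (Or.inr rfl)
          have hc := H β hβ
          simp only [cstar] at hc
          split_ifs at hc with hex
          obtain ⟨h, hh⟩ := hex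
          rw [hval h] at hh
          split_ifs at hh with hlt
          rw [val_O_of_le α n (le_of_not_gt hlt) hv] at hh
          exact absurd hh (by simp)
      · intro H
        simp only [interp]
        rcases hv : α.val n j with _ | _ | _
        · exfalso
          have hc := H α (isJExt_refl α j)
          simp only [cstar] at hc
          rw [if_pos ⟨j, hv⟩] at hc
          exact absurd hc (by simp)
        · rfl
        · exfalso
          obtain ⟨β, hβ, hval⟩ := exists_ext_force α n j hv Val3.T (Or.inl rfl)
          have hc := H β hβ
          simp only [cstar] at hc
          rw [if_pos ⟨j + 1, by rw [hval, if_pos (by linarith : j < j + 1)]⟩] at hc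
          exact absurd hc (by simp)
  | neg B ih =>
      constructor
      · intro H
        have hBF : interp α B j = Val3.F := by
          apply ih.2
          intro β hβ
          have hc := H β hβ
          simp only [cstar] at hc
          split_ifs at hc with hcc
          exact hcc
        simp only [interp, hBF]
      · intro H
        have hBT : interp α B j = Val3.T := by
          apply ih.1
          intro β hβ
          exact (cstar_neg_F β B).mp (H β hβ)
        simp only [interp, hBT]
  | disj B C ihB ihC =>
      constructor
      · intro H
        simp only [interp]
        have h1 : ∀ β : DI9Val, IsJExt β α j →
            (cstar β B = Val3.T ∨ cstar β C = Val3.T) := by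
          intro β hβ
          have hc := H β hβ
          simp only [cstar] at hc
          split_ifs at hc with hcc
          exact hcc
        rw [if_pos h1]
      · intro H
        simp only [interp]
        have h2 : ∀ β : DI9Val, IsJExt β α j →
            (cstar β B = Val3.F ∧ cstar β C = Val3.F) := by
          intro β hβ
          exact (cstar_disj_F β B C).mp (H β hβ)
        have hn1 : ¬ ∀ β : DI9Val, IsJExt β α j →
            (cstar β B = Val3.T ∨ cstar β C = Val3.T) := by
          intro h1
          obtain ⟨hB, hC⟩ := h2 α (isJExt_refl α j)
          rcases h1 α (isJExt_refl α j) with hT | hT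
          · rw [hT] at hB; exact absurd hB (by simp)
          · rw [hT] at hC; exact absurd hC (by simp)
        rw [if_neg hn1, if_pos h2]

theorem stmt_6 (Γ : Set Form) (A : Form) (h : TautConseq Γ A) : DI9Conseq Γ A := by
  intro j α hΓ
  apply (cstar_to_interp α j A).1
  intro β hβ
  exact h (toClassInterp β) (fun B hB => (interp_to_cstar α j B).1 (hΓ B hB) β hβ)
end

section
/- Every tautology of classical propositional logic is a DI9 logical truth; that is, if a formula A of L is assigned T by every classical interpretation for L, then Iα(A, j) = T for every DI9 valuation α for L and every real number j. -/
lemma cstar_neg_iff (α : DI9Val) (B : Form) :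
    cstar α (.neg B) = Val3.T ↔ cstar α B = Val3.F := by
  simp only [cstar]; split <;> simp_all

lemma cstar_disj_iff (α : DI9Val) (B C : Form) :
    cstar α (.disj B C) = Val3.T ↔ (cstar α B = Val3.T ∨ cstar α C = Val3.T) := by
  simp only [cstar]; split <;> simp_all

noncomputable def cstarCI (α : DI9Val) : ClassInterp :=
  ⟨cstar α, cstar_tv α, cstar_neg_iff α, cstar_disj_iff α⟩

noncomputable def allF : DI9Val :=
  ⟨fun _ _ => Val3.F, fun _ _ _ _ h => by simp_all, fun _ _ _ _ h => h,
   fun n => ⟨0, Or.inr rfl⟩⟩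

noncomputable def allT : DI9Val :=
  ⟨fun _ _ => Val3.T, fun _ _ _ _ h => h, fun _ _ _ _ h => by simp_all,
   fun n => ⟨0, Or.inl rfl⟩⟩

lemma classInterp_F_iff (Ic : ClassInterp) (A : Form) :
    Ic.val A = Val3.F ↔ Ic.val A ≠ Val3.T := by
  rcases Ic.tv A with h | h <;> simp [h]

lemma main_lemma (A : Form) :
    ((∀ Ic : ClassInterp, Ic.val A = Val3.T) → ∀ (α : DI9Val) (j : ℝ),
      interp α A j = Val3.T) ∧
    ((∀ Ic : ClassInterp, Ic.val A = Val3.F) → ∀ (α : DI9Val) (j : ℝ),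
      interp α A j = Val3.F) := by
  induction A with
  | atom n =>
      constructor
      · intro h
        have := h (cstarCI allF)
        simp [cstarCI, cstar, allF] at this
      · intro h
        have := h (cstarCI allT)
        simp [cstarCI, cstar, allT] at this
  | neg B ih =>
      constructor
      · intro h α j
        have hB : ∀ Ic : ClassInterp, Ic.val B = Val3.F := fun Ic =>
          (Ic.neg_iff B).mp (h Ic)
        have := ih.2 hB α j
        simp only [interp, this]
      · intro h α j
        have hB : ∀ Ic : ClassInterp, Ic.val B = Val3.T := by
          intro Ic
          rcases Ic.tv B with hb | hb
          · exact hb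
          · exact absurd (h Ic) (by simp [(Ic.neg_iff B).mpr hb])
        have := ih.1 hB α j
        simp only [interp, this]
  | disj B C ihB ihC =>
      constructor
      · intro h α j
        simp only [interp]
        rw [if_pos]
        intro β _
        exact (cstar_disj_iff β B C).mp (h (cstarCI β))
      · intro h α j
        have hBC : ∀ Ic : ClassInterp, Ic.val B = Val3.F ∧ Ic.val C = Val3.F := by
          intro Ic
          have hne : Ic.val (.disj B C) ≠ Val3.T := by simp [h Ic]
          constructor <;> rw [classInterp_F_iff] <;> intro ht <;>
            exact hne ((Ic.disj_iff B C).mpr (by simp [ht]))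
        simp only [interp]
        rw [if_neg, if_pos]
        · intro β _
          exact hBC (cstarCI β)
        · intro hall
          have := hall α (fun n h hh => rfl)
          rcases this with ht | ht
          · exact absurd (hBC (cstarCI α)).1 (by simp [cstarCI] at ht ⊢; simp [ht])
          · exact absurd (hBC (cstarCI α)).2 (by simp [cstarCI] at ht ⊢; simp [ht])

theorem stmt_7 (A : Form) (h : ∀ Ic : ClassInterp, Ic.val A = Val3.T) :
    ∀ (α : DI9Val) (j : ℝ), interp α A j = Val3.T := by
  exact (main_lemma A).1 h
end

section
/- Let Ic be any classical interpretation for L, and let α be the DI9 valuation for L defined by α(A, j) = Ic(A) for every atomic formula A and every real number j. Then for every formula B of L and every real number j, Iα(B, j) = Ic(B). -/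
lemma aux_neg_F (Ic : ClassInterp) (B : Form) (h : Ic.val B = Val3.T) :
    Ic.val (.neg B) = Val3.F := by
  rcases Ic.tv (.neg B) with h' | h'
  · rw [Ic.neg_iff] at h'; rw [h] at h'; exact absurd h' (by simp)
  · exact h'

lemma aux_B_F (Ic : ClassInterp) (B : Form) (h : Ic.val B ≠ Val3.T) :
    Ic.val B = Val3.F := by
  rcases Ic.tv B with h' | h'
  · exact absurd h' h
  · exact h'

lemma cstar_eq (Ic : ClassInterp) (α : DI9Val)
    (hα : ∀ (n : ℕ) (j : ℝ), α.val n j = Ic.val (Form.atom n))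
    (β : DI9Val) (j : ℝ) (hβ : IsJExt β α j) :
    ∀ B : Form, cstar β B = Ic.val B := by
  intro B
  induction B with
  | atom n =>
    rcases Ic.tv (.atom n) with h | h
    · rw [cstar, if_pos, h]
      exact ⟨j, by rw [hβ n j le_rfl, hα, h]⟩
    · rw [cstar, if_neg, h]
      rintro ⟨k, hk⟩
      have hj : β.val n j = Val3.F := by rw [hβ n j le_rfl, hα, h]
      rcases lt_trichotomy k j with hlt | heq | hgt
      · rw [hβ n k hlt.le, hα, h] at hk; exact absurd hk (by simp)
      · rw [heq, hj] at hk; exact absurd hk (by simp)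
      · rw [β.mono_F n j k hgt hj] at hk; exact absurd hk (by simp)
  | neg B ih =>
    rcases Ic.tv B with h | h
    · rw [cstar, if_neg (by rw [ih, h]; simp), aux_neg_F Ic B h]
    · rw [cstar, if_pos (by rw [ih, h]), (Ic.neg_iff B).mpr h]
  | disj B C ihB ihC =>
    by_cases h : Ic.val B = Val3.T ∨ Ic.val C = Val3.T
    · rw [cstar, if_pos (by rw [ihB, ihC]; exact h), (Ic.disj_iff B C).mpr h]
    · rw [cstar, if_neg (by rw [ihB, ihC]; exact h),
        aux_B_F Ic _ (fun hT => h ((Ic.disj_iff B C).mp hT))]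

theorem stmt_8 (Ic : ClassInterp) (α : DI9Val)
    (hα : ∀ (n : ℕ) (j : ℝ), α.val n j = Ic.val (Form.atom n)) :
    ∀ (B : Form) (j : ℝ), interp α B j = Ic.val B := by
  intro B
  induction B with
  | atom n => intro j; rw [interp, hα]
  | neg B ih =>
    intro j
    rcases Ic.tv B with h | h
    · rw [interp, ih j, h, aux_neg_F Ic B h]
    · rw [interp, ih j, h, (Ic.neg_iff B).mpr h]
  | disj B C ihB ihC =>
    intro j
    by_cases h : Ic.val B = Val3.T ∨ Ic.val C = Val3.T
    · rw [interp, if_pos, (Ic.disj_iff B C).mpr h]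
      intro β hβ
      rw [cstar_eq Ic α hα β j hβ, cstar_eq Ic α hα β j hβ]
      exact h
    · have hB : Ic.val B = Val3.F := aux_B_F Ic B (fun hT => h (Or.inl hT))
      have hC : Ic.val C = Val3.F := aux_B_F Ic C (fun hT => h (Or.inr hT))
      rw [interp, if_neg, if_pos,
        aux_B_F Ic _ (fun hT => h ((Ic.disj_iff B C).mp hT))]
      · intro β hβ
        rw [cstar_eq Ic α hα β j hβ, cstar_eq Ic α hα β j hβ]
        exact ⟨hB, hC⟩
      · intro hall
        have := hall α (fun n h hh => rfl)
        rw [cstar_eq Ic α hα α j (fun n h hh => rfl),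
          cstar_eq Ic α hα α j (fun n h hh => rfl)] at this
        exact h this
end

section
/- The law of excluded middle holds in DI9 semantics: for every formula A of L, every DI9 valuation α for L, and every real number j, Iα(A ∨ ~A, j) = T. -/
theorem stmt_15 (A : Form) (α : DI9Val) (j : ℝ) :
    interp α (Form.disj A (Form.neg A)) j = Val3.T := by
  unfold interp
  rw [if_pos]
  intro β _
  rcases cstar_tv β A with h | h
  · exact Or.inl h
  · right; unfold cstar; rw [if_pos h]
end

section
/- In DI9 semantics a disjunction can be true at a moment without either disjunct being true at that moment: there exist a DI9 valuation α for L, formulas B and C of L, and a real number j such that Iα(B ∨ C, j) = T, Iα(B, j) ≠ T, and Iα(C, j) ≠ T. -/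
theorem stmt_17 :
    ∃ (α : DI9Val) (B C : Form) (j : ℝ),
      interp α (Form.disj B C) j = Val3.T ∧
      interp α B j ≠ Val3.T ∧ interp α C j ≠ Val3.T := by
  refine ⟨⟨fun n j => if n = 0 ∧ j ≤ 0 then Val3.O else Val3.T, ?_, ?_, ?_⟩,
    Form.atom 0, Form.neg (Form.atom 0), 0, ?_, ?_, ?_⟩
  · intro n j h hjh hT
    by_cases h1 : n = 0 ∧ j ≤ 0
    · simp [h1] at hT
    · have h2 : ¬(n = 0 ∧ h ≤ 0) := fun hc => h1 ⟨hc.1, hjh.le.trans hc.2⟩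
      simp [h2]
  · intro n j h hjh hF
    split_ifs at hF <;> exact absurd hF (by decide)
  · intro n; exact ⟨1, Or.inl (by norm_num)⟩
  · rw [interp]
    rw [if_pos]
    intro β _
    by_cases h : cstar β (Form.atom 0) = Val3.T
    · exact Or.inl h
    · right
      simp only [cstar] at h ⊢
      split_ifs at h ⊢ with h1 h2 <;> simp_all
  · simp [interp]
  · simp [interp]
end

section
/- Every formula eventually stabilizes to its unique truth value: for every formula A of L and every DI9 valuation α for L, there exists a real number j such that for every real number h with j ≤ h, Iα(A, h) = α*(A). -/
lemma persist_T (v : DI9Val) (n : ℕ) {j h : ℝ} (hle : j ≤ h)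
    (hT : v.val n j = Val3.T) : v.val n h = Val3.T := by
  rcases eq_or_lt_of_le hle with rfl | hlt
  · exact hT
  · exact v.mono_T n j h hlt hT

lemma persist_F (v : DI9Val) (n : ℕ) {j h : ℝ} (hle : j ≤ h)
    (hF : v.val n j = Val3.F) : v.val n h = Val3.F := by
  rcases eq_or_lt_of_le hle with rfl | hlt
  · exact hF
  · exact v.mono_F n j h hlt hF

lemma no_T (v : DI9Val) (n : ℕ) {h : ℝ} (hF : v.val n h = Val3.F) :
    ¬ ∃ j : ℝ, v.val n j = Val3.T := by
  rintro ⟨j, hT⟩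
  rcases lt_trichotomy j h with hlt | rfl | hgt
  · have := v.mono_T n j h hlt hT; rw [hF] at this; exact Val3.noConfusion this
  · rw [hF] at hT; exact Val3.noConfusion hT
  · have := v.mono_F n h j hgt hF; rw [hT] at this; exact Val3.noConfusion this

lemma cstar_stable (α : DI9Val) (A : Form) :
    ∃ j : ℝ, ∀ h : ℝ, j ≤ h → ∀ β : DI9Val, IsJExt β α h → cstar β A = cstar α A := by
  induction A with
  | atom n =>
      obtain ⟨j, hj⟩ := α.eventually_tv n
      refine ⟨j, fun h hh β hβ => ?_⟩
      have hβh : β.val n h = α.val n h := hβ n h le_rfl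
      rcases hj with hT | hF
      · have hαh : α.val n h = Val3.T := persist_T α n hh hT
        have hβT : β.val n h = Val3.T := by rw [hβh, hαh]
        simp only [cstar]
        rw [if_pos ⟨h, hβT⟩, if_pos ⟨h, hαh⟩]
      · have hαh : α.val n h = Val3.F := persist_F α n hh hF
        have hβF : β.val n h = Val3.F := by rw [hβh, hαh]
        simp only [cstar]
        rw [if_neg (no_T β n hβF), if_neg (no_T α n hαh)]
  | neg B ih =>
      obtain ⟨j, hj⟩ := ih
      refine ⟨j, fun h hh β hβ => ?_⟩
      simp only [cstar, hj h hh β hβ]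
  | disj B C ihB ihC =>
      obtain ⟨jB, hjB⟩ := ihB
      obtain ⟨jC, hjC⟩ := ihC
      refine ⟨max jB jC, fun h hh β hβ => ?_⟩
      simp only [cstar, hjB h (le_trans (le_max_left _ _) hh) β hβ,
        hjC h (le_trans (le_max_right _ _) hh) β hβ]

theorem stmt_19 (A : Form) (α : DI9Val) :
    ∃ j : ℝ, ∀ h : ℝ, j ≤ h → interp α A h = cstar α A := by
  induction A with
  | atom n =>
      obtain ⟨j, hj⟩ := α.eventually_tv n
      refine ⟨j, fun h hh => ?_⟩
      rcases hj with hT | hF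
      · have hαh : α.val n h = Val3.T := persist_T α n hh hT
        have hex : ∃ j : ℝ, α.val n j = Val3.T := ⟨j, hT⟩
        simp only [interp, cstar, hαh, if_pos hex]
      · have hαh : α.val n h = Val3.F := persist_F α n hh hF
        simp only [interp, cstar, hαh, if_neg (no_T α n hαh)]
  | neg B ih =>
      obtain ⟨j, hj⟩ := ih
      refine ⟨j, fun h hh => ?_⟩
      simp only [interp, cstar, hj h hh]
      rcases cstar_tv α B with hT | hF
      · rw [hT]; simp
      · rw [hF]; simp
  | disj B C _ _ =>
      obtain ⟨jB, hjB⟩ := cstar_stable α B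
      obtain ⟨jC, hjC⟩ := cstar_stable α C
      refine ⟨max jB jC, fun h hh => ?_⟩
      have hB : ∀ β : DI9Val, IsJExt β α h → cstar β B = cstar α B :=
        fun β hβ => hjB h (le_trans (le_max_left _ _) hh) β hβ
      have hC : ∀ β : DI9Val, IsJExt β α h → cstar β C = cstar α C :=
        fun β hβ => hjC h (le_trans (le_max_right _ _) hh) β hβ
      have hself : IsJExt α α h := fun n h' _ => rfl
      by_cases hT : cstar α B = Val3.T ∨ cstar α C = Val3.T
      · have h1 : ∀ β : DI9Val, IsJExt β α h →
            (cstar β B = Val3.T ∨ cstar β C = Val3.T) :=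
          fun β hβ => by rw [hB β hβ, hC β hβ]; exact hT
        simp only [interp, cstar, if_pos h1, if_pos hT]
      · push_neg at hT
        have hBF : cstar α B = Val3.F := (cstar_tv α B).resolve_left hT.1
        have hCF : cstar α C = Val3.F := (cstar_tv α C).resolve_left hT.2
        have h1 : ¬ ∀ β : DI9Val, IsJExt β α h →
            (cstar β B = Val3.T ∨ cstar β C = Val3.T) :=
          fun hcon => (hcon α hself).elim hT.1 hT.2
        have h2 : ∀ β : DI9Val, IsJExt β α h →
            (cstar β B = Val3.F ∧ cstar β C = Val3.F) :=
          fun β hβ => ⟨(hB β hβ).trans hBF, (hC β hβ).trans hCF⟩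
        have h3 : ¬ (cstar α B = Val3.T ∨ cstar α C = Val3.T) :=
          fun hcon => hcon.elim hT.1 hT.2
        simp only [interp, cstar, if_neg h1, if_pos h2, if_neg h3]
end
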